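/- arXiv:1401.5892 — 2 statements merged into one kernel-verified Lean document; each statement's English description precedes it below -/
import Mathlib

section
/- If μ ≪ π with ψ = dμ/dπ and ψ log ψ ∈ L^1(π), then sup_{f ∈ C(X)} (∫ f dμ − log ∫ e^f dπ) ≤ ∫ ψ log ψ dπ. -/
/-!
Gibbs' variational inequality. With `Z = ∫ e^f dπ`, the Fenchel–Young inequality
`a b ≤ a log a + e^b - a` for `a = ψ x`, `b = f x - log Z` integrates against `π` to
`∫ ψ f dπ - log Z ≤ ∫ ψ log ψ dπ + ∫ e^f / Z dπ - ∫ ψ dπ`, and the last two integrals are both `1`.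
-/

open MeasureTheory

namespace Real

lemma mul_le_mul_log_add_exp_sub {a : ℝ} (ha : 0 ≤ a) (b : ℝ) :
    a * b ≤ a * log a + exp b - a := by
  rcases ha.eq_or_lt with rfl | ha
  · simpa using (exp_pos b).le
  have h := mul_le_mul_of_nonneg_left (add_one_le_exp (b - log a)) ha.le
  rw [exp_sub, exp_log ha, mul_div_cancel₀ _ ha.ne'] at h
  linarith

end Real

section Gibbs

variable {α : Type*} [MeasurableSpace α] {π : Measure α} {ψ g : α → ℝ}

theorem integral_mul_sub_log_integral_exp_le (hψ_nonneg : ∀ᵐ x ∂π, 0 ≤ ψ x)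
    (hψ_one : ∫ x, ψ x ∂π = 1) (hent : Integrable (fun x => ψ x * Real.log (ψ x)) π)
    (hψg : Integrable (fun x => ψ x * g x) π) (hexp : Integrable (fun x => Real.exp (g x)) π) :
    ∫ x, ψ x * g x ∂π - Real.log (∫ x, Real.exp (g x) ∂π) ≤ ∫ x, ψ x * Real.log (ψ x) ∂π := by
  have hψ_int : Integrable ψ π := .of_integral_ne_zero (by simp [hψ_one])
  have : NeZero π := ⟨by rintro rfl; simp at hψ_one⟩
  set Z := ∫ x, Real.exp (g x) ∂π
  have hZ : 0 < Z := integral_exp_pos hexp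
  have pointwise : ∀ᵐ x ∂π,
      ψ x * g x - Real.log Z * ψ x ≤ ψ x * Real.log (ψ x) + Real.exp (g x) / Z - ψ x := by
    filter_upwards [hψ_nonneg] with x hx
    have h := Real.mul_le_mul_log_add_exp_sub hx (g x - Real.log Z)
    rwa [Real.exp_sub, Real.exp_log hZ, mul_sub, mul_comm (ψ x) (Real.log Z)] at h
  have hsum : Integrable (fun x => ψ x * Real.log (ψ x) + Real.exp (g x) / Z) π :=
    hent.add (hexp.div_const Z)
  calc ∫ x, ψ x * g x ∂π - Real.log Z
      = ∫ x, (ψ x * g x - Real.log Z * ψ x) ∂π := by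
        rw [integral_sub hψg (hψ_int.const_mul _), integral_const_mul, hψ_one, mul_one]
    _ ≤ ∫ x, (ψ x * Real.log (ψ x) + Real.exp (g x) / Z - ψ x) ∂π :=
        integral_mono_ae (hψg.sub (hψ_int.const_mul _)) (hsum.sub hψ_int) pointwise
    _ = ∫ x, ψ x * Real.log (ψ x) ∂π := by
        rw [integral_sub hsum hψ_int, integral_add hent (hexp.div_const Z),
          integral_div, div_self hZ.ne', hψ_one, add_sub_cancel_right]

end Gibbs

theorem integral_withDensity_ofReal_eq_integral_mul {α : Type*} [MeasurableSpace α]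
    {π : Measure α} {ψ : α → ℝ} (hψ_meas : Measurable ψ) (hψ_nonneg : ∀ x, 0 ≤ ψ x)
    (f : α → ℝ) :
    ∫ x, f x ∂π.withDensity (fun x => ENNReal.ofReal (ψ x)) = ∫ x, ψ x * f x ∂π := by
  rw [integral_withDensity_eq_integral_toReal_smul hψ_meas.ennreal_ofReal
    (.of_forall fun _ => ENNReal.ofReal_lt_top)]
  simp only [ENNReal.toReal_ofReal (hψ_nonneg _), smul_eq_mul]

/-- If `μ ≪ π` with `ψ = dμ/dπ` and `ψ log ψ ∈ L¹(π)`, then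
`sup_{f ∈ C(X)} (∫ f dμ - log ∫ e^f dπ) ≤ ∫ ψ log ψ dπ`. -/
theorem stmt13 {X : Type*} [MetricSpace X] [CompactSpace X]
    [MeasurableSpace X] [BorelSpace X]
    (μ π : Measure X) [IsProbabilityMeasure μ] [IsProbabilityMeasure π]
    (ψ : X → ℝ) (hψ_meas : Measurable ψ) (hψ_nonneg : ∀ x, 0 ≤ ψ x)
    (hμ : μ = π.withDensity (fun x => ENNReal.ofReal (ψ x)))
    (hent : Integrable (fun x => ψ x * Real.log (ψ x)) π) :
    ∀ f : C(X, ℝ),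
      ∫ x, f x ∂μ - Real.log (∫ x, Real.exp (f x) ∂π) ≤
        ∫ x, ψ x * Real.log (ψ x) ∂π := by
  intro f
  have hdens (g : X → ℝ) : ∫ x, g x ∂μ = ∫ x, ψ x * g x ∂π :=
    hμ ▸ integral_withDensity_ofReal_eq_integral_mul hψ_meas hψ_nonneg g
  have hψ_one : ∫ x, ψ x ∂π = 1 := by simpa using (hdens 1).symm
  have hψ_int : Integrable ψ π := .of_integral_ne_zero (by simp [hψ_one])
  have hψf : Integrable (fun x => ψ x * f x) π :=
    hψ_int.mul_bdd f.continuous.aestronglyMeasurable (.of_forall f.norm_coe_le_norm)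
  have hexp : Integrable (fun x => Real.exp (f x)) π :=
    (Real.continuous_exp.comp f.continuous).integrable_of_hasCompactSupport (.of_compactSpace _)
  rw [hdens]
  exact integral_mul_sub_log_integral_exp_le (.of_forall hψ_nonneg) hψ_one hent hψf hexp
end

section
/- If H(μ,π) = sup_{f ∈ C(X)} (∫ f dμ − log ∫ e^f dπ) is finite, then μ ≪ π, ψ = dμ/dπ satisfies ψ log ψ ∈ L^1(π), and H(μ,π) = ∫ ψ log ψ dπ. -/
/-!
The inequality `∫ f dμ - log ∫ exp f dπ ≤ ∫ ψ log ψ dπ` is Gibbs' inequality for `μ` against the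
tilted measure `exp f • π / ∫ exp f dπ`. Conversely, a bound `H` on the left-hand side over
continuous `f` extends to bounded measurable `f`: these are `(μ + π)`-a.e. limits of uniformly
bounded continuous functions, so dominated convergence applies. Testing with `n • 1_s` for a
`π`-null set `s` gives `μ ≪ π`; testing with `log` of `ψ` clamped to `[exp (-n), exp n]` and
letting `n → ∞` gives, by Fatou's lemma, integrability of `ψ log ψ` and `∫ ψ log ψ dπ ≤ H`.
-/

open MeasureTheory

section DonskerVaradhan

open Real Filter Topology
open scoped ENNReal BoundedContinuousFunction

noncomputable def donskerVaradhan {α : Type*} [MeasurableSpace α] (μ ν : Measure α) (f : α → ℝ) :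
    ℝ :=
  ∫ x, f x ∂μ - log (∫ x, exp (f x) ∂ν)

lemma donskerVaradhan_le_integral_mul_log {α : Type*} [MeasurableSpace α] {μ ν : Measure α}
    [IsProbabilityMeasure μ] [IsProbabilityMeasure ν] (hμν : μ ≪ ν)
    (h_int : Integrable (fun x ↦ (μ.rnDeriv ν x).toReal * log (μ.rnDeriv ν x).toReal) ν)
    {f : α → ℝ} (hfμ : Integrable f μ) (hfν : Integrable (fun x ↦ exp (f x)) ν) :
    donskerVaradhan μ ν f ≤ ∫ x, (μ.rnDeriv ν x).toReal * log (μ.rnDeriv ν x).toReal ∂ν := by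
  rw [integrable_rnDeriv_mul_log_iff hμν] at h_int
  have := isProbabilityMeasure_tilted hfν
  have h := InformationTheory.integral_llr_add_sub_measure_univ_nonneg
    (hμν.trans (absolutelyContinuous_tilted hfν)) (integrable_llr_tilted_right hμν hfμ h_int hfν)
  rw [integral_llr_tilted_right hμν hfμ hfν h_int] at h
  rw [integral_rnDeriv_mul_log hμν, donskerVaradhan]
  simp only [probReal_univ, add_sub_cancel_right] at h
  linarith

lemma tendsto_donskerVaradhan {α : Type*} [MeasurableSpace α] {μ ν : Measure α}
    [IsFiniteMeasure μ] [IsFiniteMeasure ν] [NeZero ν] {F : ℕ → α → ℝ} {φ : α → ℝ} {C : ℝ}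
    (hF : ∀ j, Measurable (F j)) (hFC : ∀ j x, |F j x| ≤ C) (hφ : Measurable φ)
    (hφC : ∀ x, |φ x| ≤ C) (hμ : ∀ᵐ x ∂μ, Tendsto (fun j ↦ F j x) atTop (𝓝 (φ x)))
    (hν : ∀ᵐ x ∂ν, Tendsto (fun j ↦ F j x) atTop (𝓝 (φ x))) :
    Tendsto (fun j ↦ donskerVaradhan μ ν (F j)) atTop (𝓝 (donskerVaradhan μ ν φ)) := by
  have exp_le {t : ℝ} (ht : |t| ≤ C) : ‖exp t‖ ≤ exp C := by
    rw [norm_of_nonneg (exp_pos t).le]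
    exact exp_le_exp.mpr (le_of_abs_le ht)
  have h_int : Tendsto (fun j ↦ ∫ x, F j x ∂μ) atTop (𝓝 (∫ x, φ x ∂μ)) :=
    tendsto_integral_of_dominated_convergence (fun _ ↦ C) (fun j ↦ (hF j).aestronglyMeasurable)
      (integrable_const C) (fun j ↦ ae_of_all _ (hFC j)) hμ
  have h_exp : Tendsto (fun j ↦ ∫ x, exp (F j x) ∂ν) atTop (𝓝 (∫ x, exp (φ x) ∂ν)) :=
    tendsto_integral_of_dominated_convergence (fun _ ↦ exp C)
      (fun j ↦ (hF j).exp.aestronglyMeasurable) (integrable_const _)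
      (fun j ↦ ae_of_all _ fun x ↦ exp_le (hFC j x))
      (hν.mono fun x hx ↦ (continuous_exp.tendsto _).comp hx)
  have h_pos : 0 < ∫ x, exp (φ x) ∂ν :=
    integral_exp_pos (Integrable.of_bound hφ.exp.aestronglyMeasurable _
      (ae_of_all _ fun x ↦ exp_le (hφC x)))
  exact h_int.sub ((continuousAt_log h_pos.ne').tendsto.comp h_exp)

lemma exists_seq_boundedContinuous_tendsto_ae {X : Type*} [PseudoMetricSpace X]
    [MeasurableSpace X] [BorelSpace X] (ρ : Measure X) [IsFiniteMeasure ρ] {φ : X → ℝ} {C : ℝ}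
    (hφ : Measurable φ) (hφC : ∀ x, |φ x| ≤ C) :
    ∃ F : ℕ → X →ᵇ ℝ, (∀ j x, |F j x| ≤ C) ∧
      ∀ᵐ x ∂ρ, Tendsto (fun j ↦ F j x) atTop (𝓝 (φ x)) := by
  have hφ_int : MemLp φ 1 ρ := memLp_one_iff_integrable.mpr <|
    Integrable.of_bound hφ.aestronglyMeasurable C (ae_of_all _ hφC)
  obtain ⟨ε, -, hε_pos, hε⟩ := exists_seq_strictAnti_tendsto' (zero_lt_one' ℝ≥0∞)
  choose u hu using fun k ↦
    hφ_int.exists_boundedContinuous_eLpNorm_sub_le ENNReal.one_ne_top (hε_pos k).1.ne'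
  have h_meas : TendstoInMeasure ρ (fun k ↦ ⇑(u k)) atTop φ := by
    refine tendstoInMeasure_of_tendsto_eLpNorm one_ne_zero
      (fun k ↦ (u k).continuous.aestronglyMeasurable) hφ.aestronglyMeasurable ?_
    refine tendsto_of_tendsto_of_tendsto_of_le_of_le tendsto_const_nhds hε (fun _ ↦ zero_le)
      fun k ↦ ?_
    rw [eLpNorm_sub_comm]
    exact (hu k).1
  obtain ⟨ns, -, h_ae⟩ := h_meas.exists_seq_tendsto_ae
  let clamp : ℝ → ℝ := fun t ↦ max (-C) (min C t)
  have clamp_abs (t : ℝ) (x : X) : |clamp t| ≤ C := by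
    have := (abs_nonneg _).trans (hφC x)
    exact abs_le.mpr ⟨le_max_left _ _, max_le (by linarith) (min_le_left _ _)⟩
  have clamp_φ (x : X) : clamp (φ x) = φ x := by
    obtain ⟨h₁, h₂⟩ := abs_le.mp (hφC x)
    simp only [clamp, min_eq_right h₂, max_eq_right h₁]
  refine ⟨fun j ↦ .ofNormedAddCommGroup (fun x ↦ clamp (u (ns j) x)) (by fun_prop) C
    fun x ↦ clamp_abs _ x, fun j x ↦ clamp_abs _ x, ?_⟩
  filter_upwards [h_ae] with x hx
  rw [← clamp_φ x]
  exact ((show Continuous clamp by fun_prop).tendsto _).comp hx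

lemma donskerVaradhan_le_of_measurable {X : Type*} [PseudoMetricSpace X] [MeasurableSpace X]
    [BorelSpace X] {μ ν : Measure X} [IsFiniteMeasure μ] [IsFiniteMeasure ν] [NeZero ν] {H : ℝ}
    (hH : ∀ f : X →ᵇ ℝ, donskerVaradhan μ ν f ≤ H) {φ : X → ℝ} {C : ℝ} (hφ : Measurable φ)
    (hφC : ∀ x, |φ x| ≤ C) :
    donskerVaradhan μ ν φ ≤ H := by
  obtain ⟨F, hFC, h_ae⟩ := exists_seq_boundedContinuous_tendsto_ae (μ + ν) hφ hφC
  rw [ae_add_measure_iff] at h_ae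
  exact le_of_tendsto' (tendsto_donskerVaradhan (fun j ↦ (F j).continuous.measurable) hFC hφ hφC
    h_ae.1 h_ae.2) fun j ↦ hH (F j)

lemma absolutelyContinuous_of_donskerVaradhan_le {α : Type*} [MeasurableSpace α]
    {μ ν : Measure α} [IsFiniteMeasure μ] [IsProbabilityMeasure ν] {H : ℝ}
    (hH : ∀ (φ : α → ℝ) (C : ℝ), Measurable φ → (∀ x, |φ x| ≤ C) → donskerVaradhan μ ν φ ≤ H) :
    μ ≪ ν := by
  refine Measure.AbsolutelyContinuous.mk fun s hs hνs ↦ ?_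
  have h_le (n : ℕ) : μ.real s * n ≤ H := by
    have h_exp : ∫ x, exp (s.indicator (fun _ ↦ (n : ℝ)) x) ∂ν = 1 := by
      rw [integral_congr_ae ((measure_eq_zero_iff_ae_notMem.mp hνs).mono fun x hx ↦
        show exp (s.indicator _ x) = 1 by simp [hx])]
      simp
    have := hH (s.indicator fun _ ↦ (n : ℝ)) n (measurable_const.indicator hs) fun x ↦ by
      by_cases hx : x ∈ s <;> simp [hx]
    rwa [donskerVaradhan, h_exp, log_one, sub_zero, integral_indicator_const _ hs,
      smul_eq_mul] at this
  by_contra hμs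
  have h_pos : 0 < μ.real s := ENNReal.toReal_pos hμs (measure_ne_top μ s)
  obtain ⟨n, hn⟩ := exists_nat_gt (H / μ.real s)
  rw [div_lt_iff₀ h_pos] at hn
  linarith [h_le n]

noncomputable def clampedLog (n : ℕ) (t : ℝ) : ℝ :=
  log (max (min t (exp n)) (exp (-n)))

lemma exp_clampedLog (n : ℕ) (t : ℝ) :
    exp (clampedLog n t) = max (min t (exp n)) (exp (-n)) :=
  exp_log ((exp_pos _).trans_le (le_max_right _ _))

lemma measurable_clampedLog (n : ℕ) : Measurable (clampedLog n) := by
  unfold clampedLog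
  fun_prop

lemma abs_clampedLog_le (n : ℕ) (t : ℝ) : |clampedLog n t| ≤ n := by
  rw [abs_le, ← exp_le_exp, ← exp_le_exp (y := (n : ℝ)), exp_clampedLog]
  exact ⟨le_max_right _ _, max_le (min_le_right _ _) (exp_le_exp.mpr (by simp))⟩

lemma exp_clampedLog_le {t : ℝ} (ht : 0 ≤ t) (n : ℕ) : exp (clampedLog n t) ≤ t + exp (-n) := by
  rw [exp_clampedLog]
  exact max_le (by linarith [min_le_left t (exp n), exp_pos (-n)]) (by linarith)

lemma clampedLog_eq_log {t : ℝ} (ht : 0 < t) {n : ℕ} (hn : |log t| ≤ n) :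
    clampedLog n t = log t := by
  obtain ⟨h₁, h₂⟩ := abs_le.mp hn
  rw [clampedLog, min_eq_left ((log_le_iff_le_exp ht).mp h₂),
    max_eq_left ((le_log_iff_exp_le ht).mp (by linarith))]

lemma tendsto_mul_clampedLog {t : ℝ} (ht : 0 ≤ t) :
    Tendsto (fun n : ℕ ↦ t * clampedLog n t) atTop (𝓝 (t * log t)) := by
  rcases ht.eq_or_lt with rfl | ht
  · simp
  · refine tendsto_const_nhds.congr' ?_
    filter_upwards [eventually_ge_atTop ⌈|log t|⌉₊] with n hn
    rw [clampedLog_eq_log ht ((Nat.le_ceil _).trans (Nat.cast_le.mpr hn))]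

lemma neg_one_le_mul_clampedLog {t : ℝ} (ht : 0 ≤ t) (n : ℕ) : -1 ≤ t * clampedLog n t := by
  have h_one : 1 ≤ exp (n : ℝ) := one_le_exp (Nat.cast_nonneg n)
  rcases le_total 1 t with h | h
  · have : 0 ≤ clampedLog n t := log_nonneg (le_max_of_le_left (le_min h h_one))
    nlinarith
  · set s := max (min t (exp n)) (exp (-n))
    have hts : t ≤ s := le_max_of_le_left (le_min le_rfl (h.trans h_one))
    have hs1 : s ≤ 1 := max_le ((min_le_left _ _).trans h) (exp_le_one_iff.mpr (by simp))
    have hs0 : 0 < s := (exp_pos _).trans_le (le_max_right _ _)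
    have : log s ≤ 0 := log_nonpos hs0.le hs1
    calc -1 ≤ s - 1 := by linarith
      _ ≤ s * log s := self_sub_one_le_mul_log hs0.le
      _ ≤ t * log s := mul_le_mul_of_nonpos_right hts this

lemma integrable_and_integral_le_of_tendsto_of_nonneg {α : Type*} [MeasurableSpace α]
    {μ : Measure α} {g : ℕ → α → ℝ} {G : α → ℝ} {b : ℕ → ℝ} {B : ℝ}
    (hg : ∀ n, Integrable (g n) μ) (hg0 : ∀ n, 0 ≤ᵐ[μ] g n)
    (hG : ∀ᵐ x ∂μ, Tendsto (fun n ↦ g n x) atTop (𝓝 (G x)))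
    (hb : ∀ n, ∫ x, g n x ∂μ ≤ b n) (hB : Tendsto b atTop (𝓝 B)) :
    Integrable G μ ∧ ∫ x, G x ∂μ ≤ B := by
  have hG_meas : AEStronglyMeasurable G μ :=
    aestronglyMeasurable_of_tendsto_ae _ (fun n ↦ (hg n).1) hG
  have hG0 : 0 ≤ᵐ[μ] G := by
    filter_upwards [hG, ae_all_iff.mpr hg0] with x hx hx0
    exact ge_of_tendsto' hx hx0
  have hB0 : 0 ≤ B := ge_of_tendsto' hB fun n ↦ (integral_nonneg_of_ae (hg0 n)).trans (hb n)
  have h_fatou : ∫⁻ x, ENNReal.ofReal (G x) ∂μ ≤ ENNReal.ofReal B :=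
    calc ∫⁻ x, ENNReal.ofReal (G x) ∂μ
        = ∫⁻ x, liminf (fun n ↦ ENNReal.ofReal (g n x)) atTop ∂μ :=
          lintegral_congr_ae <| hG.mono fun x hx ↦
            ((ENNReal.continuous_ofReal.tendsto _).comp hx).liminf_eq.symm
      _ ≤ liminf (fun n ↦ ∫⁻ x, ENNReal.ofReal (g n x) ∂μ) atTop :=
          lintegral_liminf_le' fun n ↦ (hg n).1.aemeasurable.ennreal_ofReal
      _ = liminf (fun n ↦ ENNReal.ofReal (∫ x, g n x ∂μ)) atTop := by
          simp_rw [ofReal_integral_eq_lintegral_ofReal (hg _) (hg0 _)]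
      _ ≤ liminf (fun n ↦ ENNReal.ofReal (b n)) atTop :=
          liminf_le_liminf (Eventually.of_forall fun n ↦ ENNReal.ofReal_le_ofReal (hb n))
      _ = ENNReal.ofReal B := ((ENNReal.continuous_ofReal.tendsto B).comp hB).liminf_eq
  have h_int : Integrable G μ :=
    ⟨hG_meas, (hasFiniteIntegral_iff_ofReal hG0).mpr (h_fatou.trans_lt ENNReal.ofReal_lt_top)⟩
  rw [← ofReal_integral_eq_lintegral_ofReal h_int hG0, ENNReal.ofReal_le_ofReal_iff hB0] at h_fatou
  exact ⟨h_int, h_fatou⟩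

lemma integral_mul_clampedLog_rnDeriv_le {α : Type*} [MeasurableSpace α]
    {μ ν : Measure α} [IsProbabilityMeasure μ] [IsProbabilityMeasure ν] (hμν : μ ≪ ν) {H : ℝ}
    (hH : ∀ (φ : α → ℝ) (C : ℝ), Measurable φ → (∀ x, |φ x| ≤ C) → donskerVaradhan μ ν φ ≤ H)
    (n : ℕ) :
    ∫ x, (μ.rnDeriv ν x).toReal * clampedLog n (μ.rnDeriv ν x).toReal ∂ν ≤ H + exp (-n) := by
  set ψ : α → ℝ := fun x ↦ (μ.rnDeriv ν x).toReal
  have hψ_int : Integrable ψ ν := Measure.integrable_toReal_rnDeriv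
  have hφ : Measurable fun x ↦ clampedLog n (ψ x) :=
    (measurable_clampedLog n).comp (μ.measurable_rnDeriv ν).ennreal_toReal
  have h_exp_int : Integrable (fun x ↦ exp (clampedLog n (ψ x))) ν :=
    .of_bound hφ.exp.aestronglyMeasurable (exp n) <| ae_of_all _ fun x ↦ by
      rw [norm_of_nonneg (exp_pos _).le]
      exact exp_le_exp.mpr (le_of_abs_le (abs_clampedLog_le n _))
  have h_exp : ∫ x, exp (clampedLog n (ψ x)) ∂ν ≤ 1 + exp (-n) :=
    calc ∫ x, exp (clampedLog n (ψ x)) ∂ν ≤ ∫ x, ψ x + exp (-n) ∂ν :=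
          integral_mono h_exp_int (hψ_int.add (integrable_const _))
            fun x ↦ exp_clampedLog_le ENNReal.toReal_nonneg n
      _ = 1 + exp (-n) := by
          rw [integral_add hψ_int (integrable_const _), Measure.integral_toReal_rnDeriv hμν]
          simp
  have h_log : log (∫ x, exp (clampedLog n (ψ x)) ∂ν) ≤ exp (-n) := by
    linarith [log_le_sub_one_of_pos (integral_exp_pos h_exp_int)]
  have h_dv := hH (fun x ↦ clampedLog n (ψ x)) n hφ fun x ↦ abs_clampedLog_le n (ψ x)
  rw [donskerVaradhan, ← integral_rnDeriv_smul hμν] at h_dv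
  simp only [smul_eq_mul] at h_dv
  linarith

lemma integrable_mul_log_rnDeriv_and_integral_le {α : Type*} [MeasurableSpace α]
    {μ ν : Measure α} [IsProbabilityMeasure μ] [IsProbabilityMeasure ν] (hμν : μ ≪ ν) {H : ℝ}
    (hH : ∀ (φ : α → ℝ) (C : ℝ), Measurable φ → (∀ x, |φ x| ≤ C) → donskerVaradhan μ ν φ ≤ H) :
    Integrable (fun x ↦ (μ.rnDeriv ν x).toReal * log (μ.rnDeriv ν x).toReal) ν ∧
      ∫ x, (μ.rnDeriv ν x).toReal * log (μ.rnDeriv ν x).toReal ∂ν ≤ H := by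
  set ψ : α → ℝ := fun x ↦ (μ.rnDeriv ν x).toReal
  have hψ0 (x : α) : 0 ≤ ψ x := ENNReal.toReal_nonneg
  have hg (n : ℕ) : Integrable (fun x ↦ ψ x * clampedLog n (ψ x)) ν :=
    Measure.integrable_toReal_rnDeriv.mul_bdd
      ((measurable_clampedLog n).comp (μ.measurable_rnDeriv ν).ennreal_toReal).aestronglyMeasurable
      (ae_of_all _ fun x ↦ abs_clampedLog_le n (ψ x))
  have h_bound (n : ℕ) : ∫ x, ψ x * clampedLog n (ψ x) + 1 ∂ν ≤ H + exp (-n) + 1 := by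
    rw [integral_add (hg n) (integrable_const 1)]
    simp only [integral_const, probReal_univ, smul_eq_mul, mul_one]
    linarith [integral_mul_clampedLog_rnDeriv_le hμν hH n]
  have hb : Tendsto (fun n : ℕ ↦ H + exp (-n) + 1) atTop (𝓝 (H + 1)) := by
    simpa using ((tendsto_exp_neg_atTop_nhds_zero.comp tendsto_natCast_atTop_atTop).const_add
      H).add_const 1
  obtain ⟨h_int, h_le⟩ := integrable_and_integral_le_of_tendsto_of_nonneg
    (fun n ↦ (hg n).add (integrable_const 1))
    (fun n ↦ ae_of_all _ fun x ↦ show 0 ≤ ψ x * clampedLog n (ψ x) + 1 by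
      linarith [neg_one_le_mul_clampedLog (hψ0 x) n])
    (ae_of_all _ fun x ↦ (tendsto_mul_clampedLog (hψ0 x)).add_const 1) h_bound hb
  have h_int' : Integrable (fun x ↦ ψ x * log (ψ x)) ν := by
    refine (h_int.sub (integrable_const 1)).congr (ae_of_all _ fun x ↦ ?_)
    simp
  rw [integral_add h_int' (integrable_const 1)] at h_le
  simp only [integral_const, probReal_univ, smul_eq_mul, mul_one] at h_le
  exact ⟨h_int', by linarith⟩

end DonskerVaradhan

/-- If `H(μ,π) = sup_{f ∈ C(X)} (∫ f dμ - log ∫ e^f dπ)` is finite, then `μ ≪ π`,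
`ψ = dμ/dπ` satisfies `ψ log ψ ∈ L¹(π)`, and `H(μ,π) = ∫ ψ log ψ dπ`. -/
theorem stmt14 {X : Type*} [MetricSpace X] [CompactSpace X]
    [MeasurableSpace X] [BorelSpace X]
    (μ π : Measure X) [IsProbabilityMeasure μ] [IsProbabilityMeasure π]
    (H : ℝ)
    (hH : IsLUB {r : ℝ | ∃ f : C(X, ℝ),
      r = ∫ x, f x ∂μ - Real.log (∫ x, Real.exp (f x) ∂π)} H) :
    μ ≪ π ∧
    Integrable (fun x => (μ.rnDeriv π x).toReal * Real.log (μ.rnDeriv π x).toReal) π ∧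
    H = ∫ x, (μ.rnDeriv π x).toReal * Real.log (μ.rnDeriv π x).toReal ∂π := by
  have h_bdd (φ : X → ℝ) (C : ℝ) (hφ : Measurable φ) (hφC : ∀ x, |φ x| ≤ C) :
      donskerVaradhan μ π φ ≤ H :=
    donskerVaradhan_le_of_measurable (fun f ↦ hH.1 ⟨f.toContinuousMap, rfl⟩) hφ hφC
  have hμπ := absolutelyContinuous_of_donskerVaradhan_le h_bdd
  obtain ⟨h_int, h_le⟩ := integrable_mul_log_rnDeriv_and_integral_le hμπ h_bdd
  refine ⟨hμπ, h_int, le_antisymm (hH.2 ?_) h_le⟩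
  rintro _ ⟨f, rfl⟩
  exact donskerVaradhan_le_integral_mul_log hμπ h_int
    (f.continuous.integrable_of_hasCompactSupport (.of_compactSpace _))
    ((Real.continuous_exp.comp f.continuous).integrable_of_hasCompactSupport (.of_compactSpace _))
end
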